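/- arXiv:math/0106107 — 2 statements merged into one kernel-verified Lean document; each statement's English description precedes it below -/
import Mathlib

section
/- Let E₁ and E₂ be Banach spaces over 𝕜, let 𝒜₁ ⊆ B(E₁) and 𝒜₂ ⊆ B(E₂) be standard subalgebras, and let T : 𝒜₁ → 𝒜₂ be a biseparating linear bijection. Suppose S : E₁ → E₂ and Ψ : E₁* → E₂* are (plain) linear bijections satisfying T(e ⊗ e*) = S(e) ⊗ Ψ(e*) for all e ∈ E₁ and e* ∈ E₁*. Then there exists a nonzero scalar α ∈ 𝕜 such that (Ψ(e*)) ∘ S = α · e* for every e* ∈ E₁*. -/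
/-!
Since `(e ⊗ f) * (e ⊗ g) = f(e) • (e ⊗ g)` and `e ⊗ g ≠ 0` for `e, g ≠ 0`, a product of two
rank-one operators vanishes exactly when `f(e) = 0`. As `T` preserves zero products in both
directions and maps `e ⊗ f` to `S e ⊗ Ψ f`, the bilinear forms `(f, e) ↦ Ψ f (S e)` and
`(f, e) ↦ f e` have the same zeros. Two such forms are proportional: in each variable separately
the kernel inclusion makes the partial functionals proportional, and the ratios obtained agree
because a vector space is never the union of two proper subspaces.
-/

set_option synthInstance.maxHeartbeats 400000
set_option maxHeartbeats 1000000

/-- A subalgebra of `B(E)` is *standard* if it contains every continuous finite-rank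
operator (it contains the identity automatically, being a subalgebra). -/
def IsStandardSubalgebra (𝕜 : Type*) [RCLike 𝕜] {E : Type*} [NormedAddCommGroup E]
    [NormedSpace 𝕜 E] (𝒜 : Subalgebra 𝕜 (E →L[𝕜] E)) : Prop :=
  ∀ A : E →L[𝕜] E, FiniteDimensional 𝕜 (LinearMap.range (A : E →ₗ[𝕜] E)) → A ∈ 𝒜

/-- The rank-one operator `e ⊗ e*` sending `e'` to `e*(e') • e`. -/
noncomputable def rankOne {𝕜 : Type*} [RCLike 𝕜] {E : Type*} [NormedAddCommGroup E]
    [NormedSpace 𝕜 E] (e : E) (f : E →L[𝕜] 𝕜) : E →L[𝕜] E :=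
  f.smulRight e

namespace LinearMap

variable {K V W : Type*} [Field K] [AddCommGroup V] [Module K V] [AddCommGroup W] [Module K W]

theorem exists_eq_smul_of_ker_le {φ ψ : V →ₗ[K] K} (h : ker ψ ≤ ker φ) :
    ∃ c : K, φ = c • ψ := by
  have hspan : φ ∈ Submodule.span K (Set.range fun _ : Unit => ψ) :=
    mem_span_of_iInf_ker_le_ker (by simpa using h)
  obtain ⟨c, hc⟩ := Submodule.mem_span_singleton.mp (by simpa using hspan)
  exact ⟨c, hc.symm⟩

theorem exists_apply_ne_zero_and_apply_ne_zero {R X M N : Type*} [Semiring R] [AddCommMonoid X]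
    [Module R X] [AddCommMonoid M] [Module R M] [AddCommMonoid N] [Module R N]
    {φ : X →ₗ[R] M} {ψ : X →ₗ[R] N}
    (hφ : φ ≠ 0) (hψ : ψ ≠ 0) : ∃ v, φ v ≠ 0 ∧ ψ v ≠ 0 := by
  obtain ⟨v, hv⟩ : ∃ v, φ v ≠ 0 := by simpa [LinearMap.ext_iff] using hφ
  obtain ⟨u, hu⟩ : ∃ u, ψ u ≠ 0 := by simpa [LinearMap.ext_iff] using hψ
  by_cases hψv : ψ v = 0
  · by_cases hφu : φ u = 0
    · exact ⟨v + u, by simpa [hφu] using hv, by simpa [hψv] using hu⟩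
    · exact ⟨u, hφu, hu⟩
  · exact ⟨v, hv, hψv⟩

theorem exists_eq_smul_of_apply_eq_zero_iff {B P : V →ₗ[K] W →ₗ[K] K}
    (h : ∀ v w, B v w = 0 ↔ P v w = 0) : ∃ α : K, α ≠ 0 ∧ B = α • P := by
  choose c hc using fun w ↦ exists_eq_smul_of_ker_le (φ := B.flip w) (ψ := P.flip w)
    fun v hv ↦ (h v w).2 hv
  choose d hd using fun v ↦ exists_eq_smul_of_ker_le (φ := B v) (ψ := P v)
    fun w hw ↦ (h v w).2 hw
  have hcd : ∀ v w, P v w ≠ 0 → c w = d v := fun v w hvw ↦ mul_right_cancel₀ hvw <| by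
    simpa using (congr($(hc w) v)).symm.trans congr($(hd v) w)
  by_cases hP : P = 0
  · refine ⟨1, one_ne_zero, ?_⟩
    ext v w
    simp [(h v w).2 (by simp [hP]), hP]
  obtain ⟨v₀, w₀, hv₀w₀⟩ : ∃ v₀ w₀, P v₀ w₀ ≠ 0 := by
    simpa [LinearMap.ext_iff] using hP
  refine ⟨c w₀, fun hc₀ ↦ hv₀w₀ ((h v₀ w₀).1 (by simpa [hc₀] using congr($(hc w₀) v₀))), ?_⟩
  ext v w
  have hB : B v w = c w * P v w := by simpa using congr($(hc w) v)
  by_cases hvw : P v w = 0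
  · simp [hB, hvw]
  obtain ⟨v', hv'w, hv'w₀⟩ := exists_apply_ne_zero_and_apply_ne_zero (φ := P.flip w)
    (ψ := P.flip w₀) (fun h0 ↦ hvw congr($h0 v)) (fun h0 ↦ hv₀w₀ congr($h0 v₀))
  simp only [smul_apply, smul_eq_mul, hB, hcd v' w hv'w, hcd v' w₀ hv'w₀]

end LinearMap

section RankOne

variable {𝕜 E : Type*} [RCLike 𝕜] [NormedAddCommGroup E] [NormedSpace 𝕜 E]

theorem rankOne_mul_rankOne (e e' : E) (f f' : E →L[𝕜] 𝕜) :
    rankOne e f * rankOne e' f' = f e' • rankOne e f' := by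
  ext x
  simp [rankOne, smul_smul, mul_comm]

theorem rankOne_eq_zero_iff {e : E} {f : E →L[𝕜] 𝕜} : rankOne e f = 0 ↔ e = 0 ∨ f = 0 := by
  refine ⟨fun h ↦ or_iff_not_imp_left.2 fun he ↦ ?_, ?_⟩
  · ext x
    simpa [rankOne, he] using congr($h x)
  · rintro (rfl | rfl) <;> simp [rankOne]

theorem rankOne_mul_rankOne_eq_zero_iff {e e' : E} {f f' : E →L[𝕜] 𝕜} (he : e ≠ 0)
    (hf' : f' ≠ 0) : rankOne e f * rankOne e' f' = 0 ↔ f e' = 0 := by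
  rw [rankOne_mul_rankOne, smul_eq_zero, rankOne_eq_zero_iff]
  simp [he, hf']

theorem IsStandardSubalgebra.rankOne_mem {𝒜 : Subalgebra 𝕜 (E →L[𝕜] E)}
    (h𝒜 : IsStandardSubalgebra 𝕜 𝒜) (e : E) (f : E →L[𝕜] 𝕜) : rankOne e f ∈ 𝒜 := by
  refine h𝒜 _ (Submodule.finiteDimensional_of_le (S₂ := Submodule.span 𝕜 {e}) ?_)
  rintro _ ⟨x, rfl⟩
  exact Submodule.smul_mem _ _ (Submodule.mem_span_singleton_self e)

end RankOne

theorem map_apply_map_eq_zero_iff_of_separating {𝕜 E₁ E₂ : Type*} [RCLike 𝕜]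
    [NormedAddCommGroup E₁] [NormedSpace 𝕜 E₁] [NormedAddCommGroup E₂] [NormedSpace 𝕜 E₂]
    {𝒜₁ : Subalgebra 𝕜 (E₁ →L[𝕜] E₁)} {𝒜₂ : Subalgebra 𝕜 (E₂ →L[𝕜] E₂)}
    (h𝒜₁ : IsStandardSubalgebra 𝕜 𝒜₁) {T : 𝒜₁ → 𝒜₂}
    (hsep : ∀ a b : 𝒜₁, a * b = 0 → T a * T b = 0)
    (hsep' : ∀ a b : 𝒜₁, T a * T b = 0 → a * b = 0)
    {S : E₁ →ₗ[𝕜] E₂} {Ψ : (E₁ →L[𝕜] 𝕜) →ₗ[𝕜] (E₂ →L[𝕜] 𝕜)}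
    (hS : Function.Injective S) (hΨ : Function.Injective Ψ)
    (hrep : ∀ (e : E₁) (f : E₁ →L[𝕜] 𝕜) (h : rankOne e f ∈ 𝒜₁),
      ((T ⟨rankOne e f, h⟩ : E₂ →L[𝕜] E₂)) = rankOne (S e) (Ψ f))
    (f : E₁ →L[𝕜] 𝕜) (e : E₁) : Ψ f (S e) = 0 ↔ f e = 0 := by
  rcases eq_or_ne e 0 with rfl | he
  · simp
  obtain ⟨g, hg⟩ := SeparatingDual.exists_ne_zero (R := 𝕜) he
  have hg0 : g ≠ 0 := by rintro rfl; exact hg rfl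
  let a : 𝒜₁ := ⟨rankOne e f, h𝒜₁.rankOne_mem e f⟩
  let b : 𝒜₁ := ⟨rankOne e g, h𝒜₁.rankOne_mem e g⟩
  calc Ψ f (S e) = 0 ↔ rankOne (S e) (Ψ f) * rankOne (S e) (Ψ g) = 0 :=
        (rankOne_mul_rankOne_eq_zero_iff ((map_ne_zero_iff S hS).2 he)
          ((map_ne_zero_iff Ψ hΨ).2 hg0)).symm
    _ ↔ T a * T b = 0 := by
      rw [← hrep, ← hrep, ← Subalgebra.coe_mul, ZeroMemClass.coe_eq_zero]
    _ ↔ a * b = 0 := ⟨hsep' a b, hsep a b⟩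
    _ ↔ f e = 0 := by
      rw [← ZeroMemClass.coe_eq_zero, Subalgebra.coe_mul]
      exact rankOne_mul_rankOne_eq_zero_iff he hg0

theorem psi_comp_S_is_scalar_multiple_general
    {𝕜 : Type*} [RCLike 𝕜]
    {E₁ E₂ : Type*} [NormedAddCommGroup E₁] [NormedSpace 𝕜 E₁]
    [NormedAddCommGroup E₂] [NormedSpace 𝕜 E₂]
    (𝒜₁ : Subalgebra 𝕜 (E₁ →L[𝕜] E₁)) (𝒜₂ : Subalgebra 𝕜 (E₂ →L[𝕜] E₂))
    (h𝒜₁ : IsStandardSubalgebra 𝕜 𝒜₁)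
    (T : 𝒜₁ →ₗ[𝕜] 𝒜₂)
    (hsep : ∀ a b : 𝒜₁, a * b = 0 → T a * T b = 0)
    (hsep' : ∀ a b : 𝒜₁, T a * T b = 0 → a * b = 0)
    (S : E₁ →ₗ[𝕜] E₂) (Ψ : (E₁ →L[𝕜] 𝕜) →ₗ[𝕜] (E₂ →L[𝕜] 𝕜))
    (hS : Function.Bijective S) (hΨ : Function.Bijective Ψ)
    (hrep : ∀ (e : E₁) (f : E₁ →L[𝕜] 𝕜) (h : rankOne e f ∈ 𝒜₁),
      ((T ⟨rankOne e f, h⟩ : E₂ →L[𝕜] E₂)) = rankOne (S e) (Ψ f)) :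
    ∃ α : 𝕜, α ≠ 0 ∧ ∀ (f : E₁ →L[𝕜] 𝕜) (e : E₁), Ψ f (S e) = α * f e := by
  have hzero := map_apply_map_eq_zero_iff_of_separating h𝒜₁ hsep hsep' hS.injective
    hΨ.injective hrep
  obtain ⟨α, hα, hB⟩ := LinearMap.exists_eq_smul_of_apply_eq_zero_iff
    (B := ((ContinuousLinearMap.coeLM 𝕜).comp Ψ).compl₂ S)
    (P := ContinuousLinearMap.coeLM 𝕜) (by simpa using hzero)
  exact ⟨α, hα, fun f e ↦ by simpa using congr($hB f e)⟩

theorem psi_comp_S_is_scalar_multiple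
    {𝕜 : Type*} [RCLike 𝕜]
    {E₁ E₂ : Type*} [NormedAddCommGroup E₁] [NormedSpace 𝕜 E₁] [CompleteSpace E₁]
    [NormedAddCommGroup E₂] [NormedSpace 𝕜 E₂] [CompleteSpace E₂]
    (𝒜₁ : Subalgebra 𝕜 (E₁ →L[𝕜] E₁)) (𝒜₂ : Subalgebra 𝕜 (E₂ →L[𝕜] E₂))
    (h𝒜₁ : IsStandardSubalgebra 𝕜 𝒜₁) (h𝒜₂ : IsStandardSubalgebra 𝕜 𝒜₂)
    (T : 𝒜₁ →ₗ[𝕜] 𝒜₂) (hbij : Function.Bijective T)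
    (hsep : ∀ a b : 𝒜₁, a * b = 0 → T a * T b = 0)
    (hsep' : ∀ a b : 𝒜₁, T a * T b = 0 → a * b = 0)
    (S : E₁ →ₗ[𝕜] E₂) (Ψ : (E₁ →L[𝕜] 𝕜) →ₗ[𝕜] (E₂ →L[𝕜] 𝕜))
    (hS : Function.Bijective S) (hΨ : Function.Bijective Ψ)
    (hrep : ∀ (e : E₁) (f : E₁ →L[𝕜] 𝕜) (h : rankOne e f ∈ 𝒜₁),
      ((T ⟨rankOne e f, h⟩ : E₂ →L[𝕜] E₂)) = rankOne (S e) (Ψ f)) :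
    ∃ α : 𝕜, α ≠ 0 ∧ ∀ (f : E₁ →L[𝕜] 𝕜) (e : E₁), Ψ f (S e) = α * f e :=
  psi_comp_S_is_scalar_multiple_general 𝒜₁ 𝒜₂ h𝒜₁ T hsep hsep' S Ψ hS hΨ hrep
end

section
/- Let X be a completely regular Hausdorff space, E a nonzero Banach space over 𝕜, and 𝒜 a standard subalgebra of B(E). Then for all F₁, F₂ ∈ C(X, 𝒜): c(F₁) ∩ c(F₂) = ∅ if and only if 𝒞(F₁) ∩ 𝒞(F₂) = {0}. -/
/-!
If `H` is in `AI` and `F * H = 0`, then `H` vanishes on the cozero set of `F`: for any operator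
`R` of rank one, `R * F` kills `H` from the left, hence `H * R * F = 0`, and a separating
functional turns this into `H y = 0` wherever `F y ≠ 0`. Continuous scalar functions `ψ • 1` are
central, so they lie in `AI`; with Urysohn functions of the completely regular space `X` this
gives `c(G) ⊆ closure c(F)` for `G ∈ 𝒞(F)`, and `ψ • 1 ∈ 𝒞(F)` whenever `c(ψ) ⊆ c(F)`. The first
fact makes the open set `c(G)` empty when `c(F₁) ∩ c(F₂) = ∅`; the second produces a nonzero
element of `𝒞(F₁) ∩ 𝒞(F₂)` from a bump function inside `c(F₁) ∩ c(F₂)`.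
-/

set_option synthInstance.maxHeartbeats 400000
set_option maxHeartbeats 1000000

open Function Set

/-- The set `𝒞(F)` of the paper; the hypothesis on `H` says `H ∈ AI`. -/
def annihilatorClosure {R : Type*} [Mul R] [Zero R] (F : R) : Set R :=
  {G | ∀ H, (∀ K, K * H = 0 → H * K = 0) → F * H = 0 → G * H = 0}

lemma zero_mem_annihilatorClosure {R : Type*} [MulZeroClass R] (F : R) :
    0 ∈ annihilatorClosure F :=
  fun H _ _ => zero_mul H

lemma mul_mul_eq_zero_of_mul_eq_zero {R : Type*} [SemigroupWithZero R] {F H : R}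
    (hH : ∀ K, K * H = 0 → H * K = 0) (hFH : F * H = 0) (r : R) : H * (r * F) = 0 :=
  hH _ (by rw [mul_assoc, hFH, mul_zero])

lemma ContinuousLinearMap.eq_zero_of_forall_mul_smulRight_mul_eq_zero
    {R V : Type*} [Field R] [TopologicalSpace R] [AddCommGroup V] [TopologicalSpace V]
    [Module R V] [ContinuousSMul R V] [SeparatingDual R V] {A B : V →L[R] V} (hB : B ≠ 0)
    (h : ∀ (f : StrongDual R V) (u : V), A * f.smulRight u * B = 0) : A = 0 := by
  obtain ⟨w, hw⟩ : ∃ w, B w ≠ 0 := by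
    by_contra! hw
    exact hB (ext hw)
  obtain ⟨f, hf⟩ := SeparatingDual.exists_ne_zero (R := R) hw
  ext u
  simpa [hf] using congr($(h f u) w)

lemma CompletelyRegularSpace.exists_continuousMap_support_subset (𝕜 : Type*) [RCLike 𝕜]
    {X : Type*} [TopologicalSpace X] [CompletelyRegularSpace X] {U : Set X} (hU : IsOpen U)
    {x : X} (hx : x ∈ U) : ∃ ψ : C(X, 𝕜), ψ x = 1 ∧ support ψ ⊆ U := by
  obtain ⟨f, hf, hfx, hfU⟩ := CompletelyRegularSpace.completely_regular_isOpen x U hU hx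
  refine ⟨⟨fun z => ((1 - f z : ℝ) : 𝕜), by fun_prop⟩, by simp [hfx], fun z hz => ?_⟩
  by_contra hzU
  simp [hfU hzU] at hz

lemma IsOpen.eq_empty_of_subset_closure_of_subset_closure {X : Type*} [TopologicalSpace X]
    {U S T : Set X} (hU : IsOpen U) (hT : IsOpen T) (hST : Disjoint S T)
    (hUS : U ⊆ closure S) (hUT : U ⊆ closure T) : U = ∅ :=
  disjoint_self.mp <| (((hST.closure_left hT).mono_left hUS).closure_right hU).mono_right hUT

section ScalarFunctions

variable {𝕜 : Type*} [CommSemiring 𝕜] [TopologicalSpace 𝕜] {X : Type*} [TopologicalSpace X]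
  {A : Type*} [Semiring A] [TopologicalSpace A] [IsTopologicalSemiring A] [Algebra 𝕜 A]
  [ContinuousSMul 𝕜 A]

lemma ContinuousMap.smul_one_mul_apply (ψ : C(X, 𝕜)) (K : C(X, A)) (x : X) :
    (ψ • (1 : C(X, A)) * K) x = ψ x • K x := by
  simp [ContinuousMap.smul_apply']

lemma ContinuousMap.mul_smul_one_apply (ψ : C(X, 𝕜)) (K : C(X, A)) (x : X) :
    (K * ψ • (1 : C(X, A))) x = ψ x • K x := by
  simp [ContinuousMap.smul_apply']

lemma ContinuousMap.commute_smul_one (ψ : C(X, 𝕜)) (K : C(X, A)) :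
    Commute (ψ • (1 : C(X, A))) K := by
  ext x : 1
  rw [smul_one_mul_apply, mul_smul_one_apply]

end ScalarFunctions

lemma support_subset_closure_support_of_mem_annihilatorClosure (𝕜 : Type*) [RCLike 𝕜]
    {X : Type*} [TopologicalSpace X] [CompletelyRegularSpace X] {A : Type*} [Semiring A]
    [TopologicalSpace A] [IsTopologicalSemiring A] [Algebra 𝕜 A] [ContinuousSMul 𝕜 A]
    {F G : C(X, A)} (hG : G ∈ annihilatorClosure F) : support G ⊆ closure (support F) := by
  intro x hx
  by_contra hxF
  obtain ⟨ψ, hψx, hψ⟩ := CompletelyRegularSpace.exists_continuousMap_support_subset 𝕜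
    isClosed_closure.isOpen_compl hxF
  have hFψ : F * ψ • 1 = 0 := by
    ext z : 1
    rw [ContinuousMap.mul_smul_one_apply]
    by_cases hz : F z = 0
    · simp [hz]
    · simp [notMem_support.mp fun h => hψ h (subset_closure hz)]
  have hGψ := congr($(hG _ (fun K hK => (ψ.commute_smul_one K).eq ▸ hK) hFψ) x)
  rw [ContinuousMap.mul_smul_one_apply, hψx, one_smul] at hGψ
  exact hx hGψ

namespace IsStandardSubalgebra

variable {𝕜 : Type*} [RCLike 𝕜] {E : Type*} [NormedAddCommGroup E] [NormedSpace 𝕜 E]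
  {𝒜 : Subalgebra 𝕜 (E →L[𝕜] E)} {X : Type*} [TopologicalSpace X]

lemma smulRight_mem (h𝒜 : IsStandardSubalgebra 𝕜 𝒜) (f : StrongDual 𝕜 E) (u : E) :
    f.smulRight u ∈ 𝒜 := by
  apply h𝒜
  refine Submodule.finiteDimensional_of_le (S₂ := Submodule.span 𝕜 {u}) ?_
  rintro _ ⟨v, rfl⟩
  exact Submodule.smul_mem _ _ (Submodule.mem_span_singleton_self u)

lemma apply_eq_zero_of_mul_eq_zero (h𝒜 : IsStandardSubalgebra 𝕜 𝒜) {F H : C(X, 𝒜)}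
    (hH : ∀ K, K * H = 0 → H * K = 0) (hFH : F * H = 0) {y : X} (hy : F y ≠ 0) :
    H y = 0 := by
  have hHRF : ∀ (f : StrongDual 𝕜 E) (u : E),
      (H y : E →L[𝕜] E) * f.smulRight u * F y = 0 := by
    intro f u
    have := mul_mul_eq_zero_of_mul_eq_zero (R := C(X, 𝒜)) hH hFH
      (ContinuousMap.const X ⟨f.smulRight u, h𝒜.smulRight_mem f u⟩)
    simpa [mul_assoc] using congr((($this y : 𝒜) : E →L[𝕜] E))
  exact Subtype.ext <|
    ContinuousLinearMap.eq_zero_of_forall_mul_smulRight_mul_eq_zero (by simpa using hy) hHRF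

lemma smul_one_mem_annihilatorClosure (h𝒜 : IsStandardSubalgebra 𝕜 𝒜) {F : C(X, 𝒜)}
    {ψ : C(X, 𝕜)} (hψ : support ψ ⊆ support F) : ψ • 1 ∈ annihilatorClosure F := by
  intro H hH hFH
  ext x : 1
  rw [ContinuousMap.smul_one_mul_apply]
  by_cases hx : ψ x = 0
  · simp [hx]
  · simp [h𝒜.apply_eq_zero_of_mul_eq_zero hH hFH (hψ hx)]

end IsStandardSubalgebra

theorem cozero_disjoint_iff_C_inter_trivial_general
    {𝕜 : Type*} [RCLike 𝕜]
    {E : Type*} [NormedAddCommGroup E] [NormedSpace 𝕜 E] [Nontrivial E]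
    (𝒜 : Subalgebra 𝕜 (E →L[𝕜] E)) (h𝒜 : IsStandardSubalgebra 𝕜 𝒜)
    {X : Type*} [TopologicalSpace X] [CompletelyRegularSpace X]
    (F₁ F₂ : C(X, 𝒜)) :
    {x | F₁ x ≠ 0} ∩ {x | F₂ x ≠ 0} = ∅ ↔
      {G : C(X, 𝒜) | ∀ H : C(X, 𝒜),
          (∀ K : C(X, 𝒜), K * H = 0 → H * K = 0) → F₁ * H = 0 → G * H = 0} ∩
        {G : C(X, 𝒜) | ∀ H : C(X, 𝒜),
          (∀ K : C(X, 𝒜), K * H = 0 → H * K = 0) → F₂ * H = 0 → G * H = 0} = {0} := by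
  change support F₁ ∩ support F₂ = ∅ ↔
    annihilatorClosure F₁ ∩ annihilatorClosure F₂ = {0}
  have isOpen_support (F : C(X, 𝒜)) : IsOpen (support F) :=
    isOpen_compl_singleton.preimage F.continuous
  constructor
  · intro hdisj
    refine eq_singleton_iff_unique_mem.mpr ⟨⟨zero_mem_annihilatorClosure F₁,
      zero_mem_annihilatorClosure F₂⟩, fun G ⟨hG₁, hG₂⟩ => ?_⟩
    have hG : support G = ∅ := (isOpen_support G).eq_empty_of_subset_closure_of_subset_closure
      (isOpen_support F₂) (disjoint_iff_inter_eq_empty.mpr hdisj)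
      (support_subset_closure_support_of_mem_annihilatorClosure 𝕜 hG₁)
      (support_subset_closure_support_of_mem_annihilatorClosure 𝕜 hG₂)
    exact ContinuousMap.ext fun x => support_eq_empty_iff.mp hG ▸ rfl
  · intro htriv
    refine eq_empty_of_forall_notMem fun x hx => ?_
    obtain ⟨ψ, hψx, hψ⟩ := CompletelyRegularSpace.exists_continuousMap_support_subset 𝕜
      ((isOpen_support F₁).inter (isOpen_support F₂)) hx
    have hψ0 : ψ • (1 : C(X, 𝒜)) = 0 := htriv.subset
      ⟨h𝒜.smul_one_mem_annihilatorClosure (hψ.trans inter_subset_left),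
        h𝒜.smul_one_mem_annihilatorClosure (hψ.trans inter_subset_right)⟩
    simpa [ContinuousMap.smul_apply', hψx] using congr($hψ0 x)

theorem cozero_disjoint_iff_C_inter_trivial
    {𝕜 : Type*} [RCLike 𝕜]
    {E : Type*} [NormedAddCommGroup E] [NormedSpace 𝕜 E] [CompleteSpace E] [Nontrivial E]
    (𝒜 : Subalgebra 𝕜 (E →L[𝕜] E)) (h𝒜 : IsStandardSubalgebra 𝕜 𝒜)
    {X : Type*} [TopologicalSpace X] [CompletelyRegularSpace X] [T2Space X]
    (F₁ F₂ : C(X, 𝒜)) :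
    {x | F₁ x ≠ 0} ∩ {x | F₂ x ≠ 0} = ∅ ↔
      {G : C(X, 𝒜) | ∀ H : C(X, 𝒜),
          (∀ K : C(X, 𝒜), K * H = 0 → H * K = 0) → F₁ * H = 0 → G * H = 0} ∩
        {G : C(X, 𝒜) | ∀ H : C(X, 𝒜),
          (∀ K : C(X, 𝒜), K * H = 0 → H * K = 0) → F₂ * H = 0 → G * H = 0} = {0} :=
  cozero_disjoint_iff_C_inter_trivial_general 𝒜 h𝒜 F₁ F₂
end
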